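/- Let Ω ⊂ ℝ^d be a bounded set and let μ_1,…,μ_K ∈ Ω be centers with fill distance h = sup_{x∈Ω} min_{1≤k≤K} ‖x−μ_k‖ > 0 and separation radius q = (1/2) min_{i≠j} ‖μ_i−μ_j‖ satisfying h ≤ ρ q for a constant ρ ≥ 1. Let the weights satisfy 0 < w₋ ≤ w_k ≤ w₊ and let Σ_k be symmetric positive definite d×d matrices with c_Σ h² I ⪯ Σ_k ⪯ C_Σ h² I for constants 0 < c_Σ ≤ C_Σ. Then for every m ≥ 0 there exists a constant C_m, depending only on d, m, ρ, c_Σ, C_Σ, w₋, w₊ (and not on K, h, or the particular centers), such that sup_{x∈Ω} Σ_{k=1}^K ψ_k(x) ‖x−μ_k‖^m ≤ C_m h^m. -/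

import Mathlib

/-!
Write `r_k = ‖x - μ_k‖`. The bounds `c_Σ h² I ⪯ Σ_k ⪯ C_Σ h² I` squeeze the Gaussian between
`exp (-r_k² / (2 c_Σ h²))` and `exp (-r_k² / (2 C_Σ h²))`. Since every point of `Ω` is within `h`
of some center, the denominator `∑ⱼ wⱼ φⱼ(x)` is at least `w₋ exp (-1 / (2 c_Σ))`, while the
Gaussian tail absorbs the moment: `φ_k(x) r_kᵐ ≲ hᵐ (1 + r_k / h)^{-(d+2)}`. Finally the balls of
radius `h / ρ ≤ q` around the centers are disjoint, so comparing the sum with the integral of the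
integrable function `(1 + ‖y - x‖ / h)^{-(d+2)}` bounds `∑_k (1 + r_k / h)^{-(d+2)}` by a constant
times `ρ^d`.
-/

/-- The anisotropic Gaussian basis function
`φₖ(x) = exp(−(1/2)(x−μₖ)ᵀ Σₖ⁻¹ (x−μₖ))`. -/
noncomputable def gaussBasis {d K : ℕ} (S : Fin K → Matrix (Fin d) (Fin d) ℝ)
    (μ : Fin K → EuclideanSpace ℝ (Fin d)) (k : Fin K)
    (x : EuclideanSpace ℝ (Fin d)) : ℝ :=
  Real.exp (-(1 / 2 : ℝ) * ∑ i, ∑ j, (x i - μ k i) * (S k)⁻¹ i j * (x j - μ k j))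

/-- The normalized Shepard weight `ψₖ(x) = wₖ φₖ(x) / ∑ⱼ wⱼ φⱼ(x)`. -/
noncomputable def shepardWeight {d K : ℕ} (S : Fin K → Matrix (Fin d) (Fin d) ℝ)
    (μ : Fin K → EuclideanSpace ℝ (Fin d)) (w : Fin K → ℝ) (k : Fin K)
    (x : EuclideanSpace ℝ (Fin d)) : ℝ :=
  w k * gaussBasis S μ k x / ∑ j, w j * gaussBasis S μ j x

open MeasureTheory Metric Module Function Matrix Real

section QuadraticForm

variable {n : Type*} [Fintype n] [DecidableEq n]

lemma Matrix.mulVec_nonsing_inv_mulVec {R : Type*} [CommRing R] {A : Matrix n n R}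
    (hA : IsUnit A.det) (v : n → R) : A *ᵥ (A⁻¹ *ᵥ v) = v := by
  rw [mulVec_mulVec, mul_nonsing_inv _ hA, one_mulVec]

variable {S : Matrix n n ℝ}

lemma Matrix.PosDef.mul_dotProduct_inv_mulVec_le (hS : S.PosDef) {c : ℝ} (hc : 0 ≤ c)
    (hSc : (S - c • 1).PosSemidef) (v : n → ℝ) : c * (v ⬝ᵥ S⁻¹ *ᵥ v) ≤ v ⬝ᵥ v := by
  set y := S⁻¹ *ᵥ v
  have hSy : S *ᵥ y = v := mulVec_nonsing_inv_mulVec ((isUnit_iff_isUnit_det S).mp hS.isUnit) v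
  have hy : c * (y ⬝ᵥ y) ≤ v ⬝ᵥ y := by
    have := hSc.dotProduct_mulVec_nonneg y
    simp only [star_trivial, sub_mulVec, smul_mulVec, one_mulVec, hSy,
      dotProduct_sub, dotProduct_smul, smul_eq_mul] at this
    rw [dotProduct_comm v y]; linarith
  have hsq : 0 ≤ (v - c • y) ⬝ᵥ (v - c • y) := dotProduct_self_star_nonneg _
  simp only [sub_dotProduct, dotProduct_sub, smul_dotProduct, dotProduct_smul, smul_eq_mul,
    dotProduct_comm y v] at hsq
  nlinarith

lemma Matrix.PosDef.dotProduct_le_mul_dotProduct_inv_mulVec (hS : S.PosDef) {c : ℝ} (hc : 0 < c)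
    (hSc : (c • 1 - S).PosSemidef) (v : n → ℝ) : v ⬝ᵥ v ≤ c * (v ⬝ᵥ S⁻¹ *ᵥ v) := by
  set y := S⁻¹ *ᵥ v
  have hSy : S *ᵥ y = v := mulVec_nonsing_inv_mulVec ((isUnit_iff_isUnit_det S).mp hS.isUnit) v
  have hSv : v ⬝ᵥ S *ᵥ v ≤ c * (v ⬝ᵥ v) := by
    have := hSc.dotProduct_mulVec_nonneg v
    simp only [star_trivial, sub_mulVec, smul_mulVec, one_mulVec, dotProduct_sub,
      dotProduct_smul, smul_eq_mul] at this
    linarith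
  have hyv : y ⬝ᵥ S *ᵥ v = v ⬝ᵥ v := by
    rw [dotProduct_mulVec, ← mulVec_transpose, (isHermitian_iff_isSymm.mp hS.isHermitian).eq, hSy]
  have hpos : 0 ≤ (c • y - v) ⬝ᵥ S *ᵥ (c • y - v) := by
    simpa using hS.posSemidef.dotProduct_mulVec_nonneg (c • y - v)
  simp only [mulVec_sub, mulVec_smul, hSy, sub_dotProduct, dotProduct_sub, smul_dotProduct,
    dotProduct_smul, smul_eq_mul, hyv, dotProduct_comm y v] at hpos
  nlinarith

end QuadraticForm

lemma exp_neg_sq_div_mul_rpow_le {C m p s : ℝ} (hC : 0 < C) (hm : 0 ≤ m) (hmp : 0 ≤ m + p)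
    (hs : 0 ≤ s) : exp (-s ^ 2 / (2 * C)) * s ^ m ≤ exp (C * (m + p) ^ 2 / 2) * (1 + s) ^ (-p) := by
  have h1s : 0 < 1 + s := by linarith
  have hpoly : s ^ m ≤ exp ((m + p) * s) * (1 + s) ^ (-p) := by
    calc s ^ m ≤ (1 + s) ^ m := by gcongr; linarith
      _ = (1 + s) ^ (m + p) * (1 + s) ^ (-p) := by rw [← rpow_add h1s]; ring_nf
      _ ≤ exp ((m + p) * s) * (1 + s) ^ (-p) := by
        gcongr
        rw [rpow_def_of_pos h1s, mul_comm]
        gcongr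
        linarith [log_le_sub_one_of_pos h1s]
  -- completing the square in `s`
  have hsq : exp (-s ^ 2 / (2 * C)) * exp ((m + p) * s) ≤ exp (C * (m + p) ^ 2 / 2) := by
    rw [← exp_add, exp_le_exp, div_add' _ _ _ (by positivity),
      div_le_div_iff₀ (by positivity) two_pos]
    nlinarith [sq_nonneg (s - C * (m + p))]
  calc exp (-s ^ 2 / (2 * C)) * s ^ m
      ≤ exp (-s ^ 2 / (2 * C)) * (exp ((m + p) * s) * (1 + s) ^ (-p)) := by gcongr
    _ ≤ exp (C * (m + p) ^ 2 / 2) * (1 + s) ^ (-p) := by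
        rw [← mul_assoc]; gcongr

lemma sum_setIntegral_le_integral {X ι : Type*} [MeasurableSpace X] {ν : Measure X} [Fintype ι]
    {s : ι → Set X} (hs : ∀ i, MeasurableSet (s i)) (hd : Pairwise (Disjoint on s)) {f : X → ℝ}
    (hf : Integrable f ν) (hf₀ : 0 ≤ f) : ∑ i, ∫ x in s i, f x ∂ν ≤ ∫ x, f x ∂ν := by
  rw [← integral_iUnion_fintype hs hd fun _ => hf.integrableOn]
  exact setIntegral_le_integral hf (.of_forall hf₀)

lemma one_add_norm_div_le_of_mem_ball {E : Type*} [SeminormedAddCommGroup E] {a h : ℝ} {c x y : E}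
    (hh : 0 < h) (hah : a ≤ h) (hy : y ∈ ball c a) :
    1 + ‖y - x‖ / h ≤ 2 * (1 + ‖x - c‖ / h) := by
  have hyx : ‖y - x‖ ≤ h + ‖x - c‖ := (norm_sub_le_norm_sub_add_norm_sub y c x).trans <| by
    rw [norm_sub_rev c x]; gcongr; exact (mem_ball_iff_norm.mp hy).le.trans hah
  have : ‖y - x‖ / h ≤ 1 + ‖x - c‖ / h := by
    rwa [div_le_iff₀ hh, add_mul, one_mul, div_mul_cancel₀ _ hh.ne']
  linarith [div_nonneg (norm_nonneg (x - c)) hh.le]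

section Packing

variable {E : Type*} [NormedAddCommGroup E] [NormedSpace ℝ E] [FiniteDimensional ℝ E]
  [MeasurableSpace E] [BorelSpace E] (ν : Measure E) [ν.IsAddHaarMeasure]

lemma MeasureTheory.Measure.addHaar_real_ball_of_pos (x : E) {r : ℝ} (hr : 0 < r) :
    ν.real (ball x r) = r ^ finrank ℝ E * ν.real (ball 0 1) := by
  rw [measureReal_def, measureReal_def, ν.addHaar_ball_of_pos x hr, ENNReal.toReal_mul,
    ENNReal.toReal_ofReal (by positivity)]

lemma integrable_one_add_norm_sub_div_rpow_neg {p : ℝ} (hp : (finrank ℝ E : ℝ) < p) (x : E)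
    {h : ℝ} (hh : 0 < h) : Integrable (fun y => (1 + ‖y - x‖ / h) ^ (-p)) ν := by
  have := ((integrable_one_add_norm (μ := ν) hp).comp_smul (inv_ne_zero hh.ne')).comp_sub_right x
  refine this.congr (.of_forall fun y => ?_)
  simp [norm_smul, abs_of_pos hh, div_eq_inv_mul]

lemma integral_one_add_norm_sub_div_rpow_neg (p : ℝ) (x : E) {h : ℝ} (hh : 0 < h) :
    ∫ y, (1 + ‖y - x‖ / h) ^ (-p) ∂ν = h ^ finrank ℝ E * ∫ z, (1 + ‖z‖) ^ (-p) ∂ν := by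
  have hscale (y : E) : (1 + ‖y - x‖ / h) ^ (-p) = (1 + ‖h⁻¹ • (y - x)‖) ^ (-p) := by
    simp [norm_smul, abs_of_pos hh, div_eq_inv_mul]
  simp_rw [hscale]
  rw [integral_sub_right_eq_self (fun y => (1 + ‖h⁻¹ • y‖) ^ (-p)) x,
    ν.integral_comp_inv_smul_of_nonneg (fun z => (1 + ‖z‖) ^ (-p)) hh.le, smul_eq_mul]

theorem sum_one_add_norm_div_rpow_neg_le {p : ℝ} (hp : (finrank ℝ E : ℝ) < p) {ι : Type*}
    [Fintype ι] (c : ι → E) {a h : ℝ} (ha : 0 < a) (hah : a ≤ h)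
    (hsep : Pairwise fun i j => 2 * a ≤ ‖c i - c j‖) (x : E) :
    ∑ i, (1 + ‖x - c i‖ / h) ^ (-p) ≤
      2 ^ p * (∫ z, (1 + ‖z‖) ^ (-p) ∂ν) / ν.real (ball 0 1) * (h / a) ^ finrank ℝ E := by
  have hh : 0 < h := ha.trans_le hah
  have hp₀ : 0 ≤ p := (Nat.cast_nonneg _).trans hp.le
  have hV : 0 < ν.real (ball (0 : E) 1) :=
    ENNReal.toReal_pos (measure_ball_pos ν 0 one_pos).ne' measure_ball_lt_top.ne
  have hf := integrable_one_add_norm_sub_div_rpow_neg ν hp x hh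
  have hball (i : ι) : 2 ^ (-p) * (1 + ‖x - c i‖ / h) ^ (-p) * (a ^ finrank ℝ E * ν.real (ball 0 1))
      ≤ ∫ y in ball (c i) a, (1 + ‖y - x‖ / h) ^ (-p) ∂ν := by
    rw [← mul_rpow zero_le_two (by positivity), ← ν.addHaar_real_ball_of_pos (c i) ha]
    refine setIntegral_ge_of_const_le_real measurableSet_ball measure_ball_lt_top.ne
      (fun y hy => ?_) hf.integrableOn
    exact rpow_le_rpow_of_nonpos (by positivity) (one_add_norm_div_le_of_mem_ball hh hah hy)
      (by linarith)
  have hdisj : Pairwise (Disjoint on fun i => ball (c i) a) := fun i j hij =>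
    ball_disjoint_ball (by rw [dist_eq_norm]; linarith [hsep hij])
  have hsum := (Finset.sum_le_sum fun i _ => hball i).trans
    (sum_setIntegral_le_integral (fun _ => measurableSet_ball) hdisj hf fun y => by positivity)
  rw [← Finset.sum_mul, ← Finset.mul_sum, integral_one_add_norm_sub_div_rpow_neg ν p x hh,
    rpow_neg zero_le_two] at hsum
  set S := ∑ i, (1 + ‖x - c i‖ / h) ^ (-p)
  calc S = 2 ^ p * ((2 ^ p)⁻¹ * S * (a ^ finrank ℝ E * ν.real (ball 0 1)))
        / ν.real (ball 0 1) / a ^ finrank ℝ E := by field_simp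
    _ ≤ 2 ^ p * (h ^ finrank ℝ E * ∫ z, (1 + ‖z‖) ^ (-p) ∂ν) / ν.real (ball 0 1)
        / a ^ finrank ℝ E := by gcongr
    _ = _ := by ring

end Packing

lemma EuclideanSpace.ofLp_dotProduct_ofLp_self {ι : Type*} [Fintype ι] (x : EuclideanSpace ℝ ι) :
    x.ofLp ⬝ᵥ x.ofLp = ‖x‖ ^ 2 := by
  rw [← real_inner_self_eq_norm_sq, EuclideanSpace.inner_eq_star_dotProduct, star_trivial]

section Gaussian

variable {d K : ℕ} {S : Fin K → Matrix (Fin d) (Fin d) ℝ} {μ : Fin K → EuclideanSpace ℝ (Fin d)}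
  {k : Fin K}

lemma gaussBasis_pos (x : EuclideanSpace ℝ (Fin d)) : 0 < gaussBasis S μ k x := exp_pos _

lemma gaussBasis_eq_exp_dotProduct (x : EuclideanSpace ℝ (Fin d)) :
    gaussBasis S μ k x =
      exp (-(1 / 2) * ((x - μ k).ofLp ⬝ᵥ (S k)⁻¹ *ᵥ (x - μ k).ofLp)) := by
  simp [gaussBasis, dotProduct, mulVec, Finset.mul_sum, mul_assoc]

lemma exp_neg_le_gaussBasis (hS : (S k).PosDef) {α : ℝ} (hα : 0 < α)
    (hSα : (S k - α • 1).PosSemidef) (x : EuclideanSpace ℝ (Fin d)) :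
    exp (-‖x - μ k‖ ^ 2 / (2 * α)) ≤ gaussBasis S μ k x := by
  have := hS.mul_dotProduct_inv_mulVec_le hα.le hSα (x - μ k).ofLp
  rw [EuclideanSpace.ofLp_dotProduct_ofLp_self] at this
  rw [gaussBasis_eq_exp_dotProduct, exp_le_exp, neg_div, neg_mul, neg_le_neg_iff,
    le_div_iff₀ (by positivity)]
  linarith

lemma gaussBasis_le_exp_neg (hS : (S k).PosDef) {β : ℝ} (hβ : 0 < β)
    (hSβ : (β • 1 - S k).PosSemidef) (x : EuclideanSpace ℝ (Fin d)) :
    gaussBasis S μ k x ≤ exp (-‖x - μ k‖ ^ 2 / (2 * β)) := by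
  have := hS.dotProduct_le_mul_dotProduct_inv_mulVec hβ hSβ (x - μ k).ofLp
  rw [EuclideanSpace.ofLp_dotProduct_ofLp_self] at this
  rw [gaussBasis_eq_exp_dotProduct, exp_le_exp, neg_div, neg_mul, neg_le_neg_iff,
    div_le_iff₀ (by positivity)]
  linarith

lemma gaussBasis_mul_norm_rpow_le (hS : (S k).PosDef) {C h : ℝ} (hC : 0 < C) (hh : 0 < h)
    (hSC : ((C * h ^ 2) • 1 - S k).PosSemidef) {m p : ℝ} (hm : 0 ≤ m) (hmp : 0 ≤ m + p)
    (x : EuclideanSpace ℝ (Fin d)) :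
    gaussBasis S μ k x * ‖x - μ k‖ ^ m ≤
      exp (C * (m + p) ^ 2 / 2) * (1 + ‖x - μ k‖ / h) ^ (-p) * h ^ m := by
  set t := ‖x - μ k‖ / h
  have ht : 0 ≤ t := by positivity
  have hr : ‖x - μ k‖ = t * h := (div_mul_cancel₀ _ hh.ne').symm
  calc gaussBasis S μ k x * ‖x - μ k‖ ^ m
      ≤ exp (-‖x - μ k‖ ^ 2 / (2 * (C * h ^ 2))) * ‖x - μ k‖ ^ m := by
        gcongr; exact gaussBasis_le_exp_neg hS (by positivity) hSC x
    _ = exp (-t ^ 2 / (2 * C)) * t ^ m * h ^ m := by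
        rw [hr, mul_rpow ht hh.le, ← mul_assoc]; congr 3; field_simp
    _ ≤ _ := by gcongr ?_ * _; exact exp_neg_sq_div_mul_rpow_le hC hm hmp ht

lemma shepardWeight_le {w : Fin K → ℝ} (hw : ∀ j, 0 ≤ w j) {W D : ℝ} (hD : 0 < D) (hwk : w k ≤ W)
    {x : EuclideanSpace ℝ (Fin d)} (hDx : D ≤ ∑ j, w j * gaussBasis S μ j x) :
    shepardWeight S μ w k x ≤ W / D * gaussBasis S μ k x := by
  rw [shepardWeight, div_mul_eq_mul_div]
  gcongr
  · exact mul_nonneg ((hw k).trans hwk) (gaussBasis_pos x).le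
  · exact (gaussBasis_pos x).le

lemma mul_exp_neg_inv_le_sum_mul_gaussBasis {w : Fin K → ℝ} (hw : ∀ j, 0 ≤ w j) {W : ℝ}
    (hWk : W ≤ w k) (hS : (S k).PosDef) {c h : ℝ} (hc : 0 < c) (hh : 0 < h)
    (hSc : (S k - (c * h ^ 2) • 1).PosSemidef) {x : EuclideanSpace ℝ (Fin d)}
    (hx : ‖x - μ k‖ ≤ h) : W * exp (-1 / (2 * c)) ≤ ∑ j, w j * gaussBasis S μ j x := by
  refine le_trans ?_ (Finset.single_le_sum (fun j _ => mul_nonneg (hw j) (gaussBasis_pos x).le)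
    (Finset.mem_univ k))
  refine mul_le_mul hWk ((exp_le_exp.2 ?_).trans (exp_neg_le_gaussBasis hS (by positivity) hSc x))
    (exp_pos _).le (hw k)
  rw [neg_div, neg_div, neg_le_neg_iff, div_le_div_iff₀ (by positivity) (by positivity)]
  nlinarith [pow_le_pow_left₀ (norm_nonneg _) hx 2]

lemma sum_shepardWeight_mul_norm_rpow_le (hS : ∀ k, (S k).PosDef) {C h : ℝ} (hC : 0 < C)
    (hh : 0 < h) (hSC : ∀ k, ((C * h ^ 2) • 1 - S k).PosSemidef) {w : Fin K → ℝ} {W D : ℝ}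
    (hw : ∀ k, 0 ≤ w k) (hwW : ∀ k, w k ≤ W) (hD : 0 < D) {x : EuclideanSpace ℝ (Fin d)}
    (hDx : D ≤ ∑ j, w j * gaussBasis S μ j x) {m p : ℝ} (hm : 0 ≤ m) (hmp : 0 ≤ m + p) :
    ∑ k, shepardWeight S μ w k x * ‖x - μ k‖ ^ m ≤
      W / D * exp (C * (m + p) ^ 2 / 2) * (∑ k, (1 + ‖x - μ k‖ / h) ^ (-p)) * h ^ m := by
  rw [Finset.mul_sum, Finset.sum_mul]
  refine Finset.sum_le_sum fun k _ => ?_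
  calc shepardWeight S μ w k x * ‖x - μ k‖ ^ m
      ≤ W / D * gaussBasis S μ k x * ‖x - μ k‖ ^ m := by
        gcongr; exact shepardWeight_le hw hD (hwW k) hDx
    _ ≤ W / D * (exp (C * (m + p) ^ 2 / 2) * (1 + ‖x - μ k‖ / h) ^ (-p) * h ^ m) := by
        rw [mul_assoc]
        exact mul_le_mul_of_nonneg_left (gaussBasis_mul_norm_rpow_le (hS k) hC hh (hSC k) hm hmp x)
          (div_nonneg ((hw k).trans (hwW k)) hD.le)
    _ = _ := by ring

end Gaussian

lemma iInf_norm_sub_le_norm_sub {E ι : Type*} [SeminormedAddCommGroup E] [Finite ι] (c : ι → E)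
    {i j : ι} (hij : i ≠ j) :
    ⨅ p : {p : ι × ι // p.1 ≠ p.2}, ‖c p.1.1 - c p.1.2‖ ≤ ‖c i - c j‖ :=
  ciInf_le (Finite.bddBelow_range _) (⟨(i, j), hij⟩ : {p : ι × ι // p.1 ≠ p.2})

lemma exists_norm_sub_le_iSup_iInf {E ι : Type*} [SeminormedAddCommGroup E] [Finite ι]
    [Nonempty ι] {Ω : Set E} (hΩ : Bornology.IsBounded Ω) (c : ι → E) {x : E} (hx : x ∈ Ω) :
    ∃ i, ‖x - c i‖ ≤ ⨆ y : Ω, ⨅ i, ‖(y : E) - c i‖ := by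
  obtain ⟨i, hi⟩ := Finite.exists_min fun i => ‖x - c i‖
  obtain ⟨R, hR⟩ := hΩ.exists_norm_le
  refine ⟨i, (le_ciInf hi).trans
    (le_ciSup (f := fun y : Ω => ⨅ i, ‖(y : E) - c i‖) ⟨R + ‖c i‖, ?_⟩ ⟨x, hx⟩)⟩
  rintro _ ⟨y, rfl⟩
  exact (ciInf_le (Finite.bddBelow_range _) i).trans
    ((norm_sub_le _ _).trans (by linarith [hR y y.2]))

/-- **moment localization.** For quasi-uniform centers, bounded weights and
covariances comparable to `h²I`, the normalized Shepard weights satisfy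
`sup_{x∈Ω} ∑ₖ ψₖ(x) ‖x−μₖ‖ᵐ ≤ Cₘ hᵐ`, with `Cₘ` depending only on
`d, m, ρ, c_Σ, C_Σ, w₋, w₊`. -/
theorem shepard_moment_localization
    (d : ℕ) (m ρ cSig CSig wlo whi : ℝ)
    (hm : 0 ≤ m) (hρ : 1 ≤ ρ) (hcSig : 0 < cSig) (hcC : cSig ≤ CSig)
    (hwlo : 0 < wlo) (hw : wlo ≤ whi) :
    ∃ C : ℝ, ∀ (Ω : Set (EuclideanSpace ℝ (Fin d))), Bornology.IsBounded Ω →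
      ∀ (K : ℕ) (μ : Fin K → EuclideanSpace ℝ (Fin d)) (h q : ℝ),
      (∀ k, μ k ∈ Ω) →
      h = ⨆ x : Ω, ⨅ k, ‖(x : EuclideanSpace ℝ (Fin d)) - μ k‖ →
      0 < h →
      q = (1 / 2) * ⨅ p : {p : Fin K × Fin K // p.1 ≠ p.2}, ‖μ p.val.1 - μ p.val.2‖ →
      h ≤ ρ * q →
      ∀ (w : Fin K → ℝ) (S : Fin K → Matrix (Fin d) (Fin d) ℝ),
        (∀ k, wlo ≤ w k ∧ w k ≤ whi) →
        (∀ k, (S k).PosDef) →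
        (∀ k, (S k - (cSig * h ^ 2) • 1).PosSemidef ∧
              ((CSig * h ^ 2) • 1 - S k).PosSemidef) →
        ∀ x ∈ Ω, ∑ k, shepardWeight S μ w k x * ‖x - μ k‖ ^ m ≤ C * h ^ m := by
  have hCSig : 0 < CSig := hcSig.trans_le hcC
  have hρ₀ : 0 < ρ := one_pos.trans_le hρ
  refine ⟨whi / (wlo * exp (-1 / (2 * cSig))) * exp (CSig * (m + (d + 2)) ^ 2 / 2) *
    (2 ^ ((d : ℝ) + 2) * (∫ z : EuclideanSpace ℝ (Fin d), (1 + ‖z‖) ^ (-((d : ℝ) + 2))) /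
      volume.real (ball (0 : EuclideanSpace ℝ (Fin d)) 1) * ρ ^ d), ?_⟩
  rintro Ω hΩ K μ h q - rfl hh rfl hhq w S hwk hS hSb x hx
  have : Nonempty (Fin K) := by
    by_contra hK
    simp [not_nonempty_iff.mp hK, Real.iInf_of_isEmpty] at hh
  obtain ⟨k₀, hk₀⟩ := exists_norm_sub_le_iSup_iInf hΩ μ hx
  set h := ⨆ y : Ω, ⨅ k, ‖(y : EuclideanSpace ℝ (Fin d)) - μ k‖
  have hw₀ (k : Fin K) : 0 ≤ w k := hwlo.le.trans (hwk k).1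
  have hden := mul_exp_neg_inv_le_sum_mul_gaussBasis hw₀ (hwk k₀).1 (hS k₀) hcSig hh (hSb k₀).1 hk₀
  have hsep : Pairwise fun i j => 2 * (h / ρ) ≤ ‖μ i - μ j‖ := fun i j hij => by
    show 2 * (h / ρ) ≤ _
    rw [mul_div_assoc', div_le_iff₀ hρ₀]
    nlinarith [mul_le_mul_of_nonneg_left (iInf_norm_sub_le_norm_sub μ hij) hρ₀.le]
  have hpack := sum_one_add_norm_div_rpow_neg_le volume (p := d + 2) (by simp) μ
    (div_pos hh hρ₀) (div_le_self hh.le hρ) hsep x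
  rw [div_div_cancel₀ hh.ne', finrank_euclideanSpace_fin] at hpack
  calc ∑ k, shepardWeight S μ w k x * ‖x - μ k‖ ^ m
      ≤ whi / (wlo * exp (-1 / (2 * cSig))) * exp (CSig * (m + (d + 2)) ^ 2 / 2) *
          (∑ k, (1 + ‖x - μ k‖ / h) ^ (-((d : ℝ) + 2))) * h ^ m :=
        sum_shepardWeight_mul_norm_rpow_le hS hCSig hh (fun k => (hSb k).2) hw₀ (fun k => (hwk k).2)
          (by positivity) hden hm (by positivity)
    _ ≤ _ := by
        have : 0 ≤ whi := hwlo.le.trans hw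
        gcongr
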